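/- arXiv:1908.10083 — 5 statements merged into one kernel-verified Lean document; each statement's English description precedes it below -/
import Mathlib

section
/- (Geršgorin-based rotor-angle stability) Suppose the real N×N matrix M defined by M_{j,ℓ} = −w_{j,ℓ} for j ≠ ℓ and M_{j,j} = ∑_{k≠j} w_{j,k}, where w_{j,ℓ} = B_{j,ℓ}cos(δ_ℓ − δ_j) + G_{j,ℓ}sin(δ_ℓ − δ_j) (note w_{j,ℓ} need not equal w_{ℓ,j}), satisfies w_{j,ℓ} > 0 for all edges (j,ℓ) and w_{j,ℓ} = 0 for non-edges of a connected graph. Then every eigenvalue λ of M has Re(λ) ≥ 0, and the zero-eigenspace is spanned by the all-ones vector. -/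
/-!
Off the diagonal the weights are nonnegative, so every row of `M` is weakly diagonally dominant:
the Gershgorin disc of row `j` is centred at `d = M j j ≥ 0` with radius `d`, hence lies in the
closed right half-plane. For the kernel, `M x = 0` says that each `x j` is a weighted average of
its neighbours' values; at a maximum of `x` the positive edge weights force every neighbour to
attain the maximum too, and connectivity spreads it to all vertices.
-/

open Finset Matrix

theorem SimpleGraph.Reachable.of_adj_imp {V : Type*} {G : SimpleGraph V} {P : V → Prop}
    (hP : ∀ a b, G.Adj a b → P a → P b) {u v : V} (h : G.Reachable u v) (hu : P u) : P v := by
  rw [SimpleGraph.reachable_iff_reflTransGen] at h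
  induction h with
  | refl => exact hu
  | tail _ hbc ih => exact hP _ _ hbc ih

namespace Matrix

variable {n : Type*} [Fintype n] [DecidableEq n]

/-- Each Gershgorin disc, centred at `A k k` with radius at most `A k k`, lies in the closed
right half-plane. -/
theorem re_nonneg_of_mulVec_eq_smul_of_diagDominant {A : Matrix n n ℝ}
    (hA : ∀ k, ∑ j ∈ univ.erase k, |A k j| ≤ A k k)
    {μ : ℂ} {v : n → ℂ} (hv : v ≠ 0) (hμ : (A.map (↑)) *ᵥ v = μ • v) : 0 ≤ μ.re := by
  have hev : Module.End.HasEigenvalue (toLin' (A.map ((↑) : ℝ → ℂ))) μ :=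
    Module.End.hasEigenvalue_of_hasEigenvector
      ⟨Module.End.mem_eigenspace_iff.mpr (by rwa [toLin'_apply]), hv⟩
  obtain ⟨k, hk⟩ := eigenvalue_mem_ball hev
  rw [Metric.mem_closedBall, dist_comm, Complex.dist_eq] at hk
  simp only [map_apply, Complex.norm_real, Real.norm_eq_abs] at hk
  have hre : A k k - μ.re ≤ ‖(A k k : ℂ) - μ‖ := by
    simpa using Complex.re_le_norm ((A k k : ℂ) - μ)
  linarith [hA k]

def laplacianOfWeights {R : Type*} [AddCommGroup R] (w : n → n → R) : Matrix n n R :=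
  of fun j ℓ => if j = ℓ then ∑ k ∈ univ.filter (· ≠ j), w j k else -w j ℓ

theorem laplacianOfWeights_mulVec_apply {R : Type*} [CommRing R] (w : n → n → R) (x : n → R)
    (i : n) : (laplacianOfWeights w *ᵥ x) i = ∑ k ∈ univ.erase i, w i k * (x i - x k) := by
  rw [mulVec, dotProduct, ← add_sum_erase _ _ (mem_univ i)]
  simp only [laplacianOfWeights, of_apply, if_pos, filter_ne', sum_mul, mul_sub,
    sum_sub_distrib]
  rw [sub_eq_add_neg, ← sum_neg_distrib]
  congr 1
  refine sum_congr rfl fun k hk => ?_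
  rw [if_neg (ne_of_mem_erase hk).symm, neg_mul]

theorem laplacianOfWeights_mulVec_const {R : Type*} [CommRing R] (w : n → n → R) (c : R) :
    laplacianOfWeights w *ᵥ (fun _ => c) = 0 := by
  ext i
  simp [laplacianOfWeights_mulVec_apply]

section Real

variable {w : n → n → ℝ}

theorem laplacianOfWeights_diagDominant (hw : ∀ j ℓ, j ≠ ℓ → 0 ≤ w j ℓ) (k : n) :
    ∑ j ∈ univ.erase k, |laplacianOfWeights w k j| ≤ laplacianOfWeights w k k := by
  simp only [laplacianOfWeights, of_apply, if_pos, filter_ne']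
  refine (sum_congr rfl fun j hj => ?_).le
  rw [if_neg (ne_of_mem_erase hj).symm, abs_neg, abs_of_nonneg (hw k j (ne_of_mem_erase hj).symm)]

/-- Discrete maximum principle: at a maximum of `x` the row identity is a vanishing sum of
nonnegative terms. -/
theorem eq_of_laplacianOfWeights_mulVec_eq_zero (hw : ∀ j ℓ, j ≠ ℓ → 0 ≤ w j ℓ) {x : n → ℝ}
    (hx : laplacianOfWeights w *ᵥ x = 0) {a b : n} (hmax : ∀ k, x k ≤ x a) (hab : a ≠ b)
    (hpos : 0 < w a b) : x b = x a := by
  have hterms : ∀ k ∈ univ.erase a, 0 ≤ w a k * (x a - x k) := fun k hk =>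
    mul_nonneg (hw a k (ne_of_mem_erase hk).symm) (sub_nonneg.mpr (hmax k))
  have hsum := congrFun hx a
  rw [laplacianOfWeights_mulVec_apply, Pi.zero_apply, sum_eq_zero_iff_of_nonneg hterms] at hsum
  have := hsum b (mem_erase.mpr ⟨hab.symm, mem_univ b⟩)
  rw [mul_eq_zero, or_iff_right hpos.ne', sub_eq_zero] at this
  exact this.symm

theorem laplacianOfWeights_mulVec_eq_zero_iff (hw : ∀ j ℓ, j ≠ ℓ → 0 ≤ w j ℓ)
    {Gr : SimpleGraph n} (hconn : Gr.Connected) (hpos : ∀ j ℓ, Gr.Adj j ℓ → 0 < w j ℓ) (x : n → ℝ) :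
    laplacianOfWeights w *ᵥ x = 0 ↔ ∃ c, x = fun _ => c := by
  refine ⟨fun hx => ?_, fun ⟨c, hc⟩ => hc ▸ laplacianOfWeights_mulVec_const w c⟩
  obtain ⟨j, -, hj⟩ := exists_max_image univ x (univ_nonempty_iff.mpr hconn.nonempty)
  have hmax : ∀ a, x a = x j → ∀ k, x k ≤ x a := fun a ha k => ha ▸ hj k (mem_univ k)
  refine ⟨x j, funext fun i => (hconn.preconnected j i).of_adj_imp (P := (x · = x j))
    (fun a b hab ha => ?_) rfl⟩
  rw [eq_of_laplacianOfWeights_mulVec_eq_zero hw hx (hmax a ha) hab.ne (hpos a b hab), ha]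

end Real

end Matrix

theorem stmt_7_general (N : ℕ) (δ : Fin N → ℝ) (B G : Matrix (Fin N) (Fin N) ℝ)
    (Gr : SimpleGraph (Fin N)) (hconn : Gr.Connected)
    (w : Fin N → Fin N → ℝ)
    (hw : ∀ j ℓ, w j ℓ = B j ℓ * Real.cos (δ ℓ - δ j) + G j ℓ * Real.sin (δ ℓ - δ j))
    (hedge : ∀ j ℓ, Gr.Adj j ℓ ↔ (j ≠ ℓ ∧ (B j ℓ ≠ 0 ∨ G j ℓ ≠ 0)))
    (hwpos : ∀ j ℓ, Gr.Adj j ℓ → 0 < w j ℓ)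
    (M : Matrix (Fin N) (Fin N) ℝ)
    (hM : ∀ j ℓ, M j ℓ =
      if j = ℓ then ∑ k ∈ Finset.univ.filter (· ≠ j), w j k else - w j ℓ) :
    (∀ (lam : ℂ) (v : Fin N → ℂ), v ≠ 0 →
        (M.map Complex.ofReal).mulVec v = lam • v → 0 ≤ lam.re) ∧
    (∀ x : Fin N → ℝ, M.mulVec x = 0 ↔ ∃ c : ℝ, x = fun _ => c) := by
  have hwnn : ∀ j ℓ, j ≠ ℓ → 0 ≤ w j ℓ := by
    intro j ℓ hjℓ
    by_cases hadj : Gr.Adj j ℓ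
    · exact (hwpos j ℓ hadj).le
    · obtain ⟨hB, hG⟩ : B j ℓ = 0 ∧ G j ℓ = 0 := by simpa [hedge, hjℓ] using hadj
      simp [hw, hB, hG]
  obtain rfl : M = laplacianOfWeights w := ext fun j ℓ => hM j ℓ
  exact ⟨fun _ _ hv hev => re_nonneg_of_mulVec_eq_smul_of_diagDominant
      (laplacianOfWeights_diagDominant hwnn) hv hev,
    laplacianOfWeights_mulVec_eq_zero_iff hwnn hconn hwpos⟩

/-- Geršgorin-based rotor-angle stability: for the (possibly non-symmetric) Laplacian `M`
built from edge weights `w j ℓ = B j ℓ cos(δ ℓ - δ j) + G j ℓ sin(δ ℓ - δ j)` which are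
positive on the edges of a connected graph and zero on non-edges, every eigenvalue of `M`
has nonnegative real part, and the zero-eigenspace is spanned by the all-ones vector. -/
theorem stmt_7 (N : ℕ) (δ : Fin N → ℝ) (B G : Matrix (Fin N) (Fin N) ℝ)
    (hBsymm : Bᵀ = B) (hGsymm : Gᵀ = G)
    (hBnn : ∀ j ℓ, j ≠ ℓ → 0 ≤ B j ℓ)
    (Gr : SimpleGraph (Fin N)) (hconn : Gr.Connected)
    (w : Fin N → Fin N → ℝ)
    (hw : ∀ j ℓ, w j ℓ = B j ℓ * Real.cos (δ ℓ - δ j) + G j ℓ * Real.sin (δ ℓ - δ j))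
    (hedge : ∀ j ℓ, Gr.Adj j ℓ ↔ (j ≠ ℓ ∧ (B j ℓ ≠ 0 ∨ G j ℓ ≠ 0)))
    (hwpos : ∀ j ℓ, Gr.Adj j ℓ → 0 < w j ℓ)
    (M : Matrix (Fin N) (Fin N) ℝ)
    (hM : ∀ j ℓ, M j ℓ =
      if j = ℓ then ∑ k ∈ Finset.univ.filter (· ≠ j), w j k else - w j ℓ) :
    (∀ (lam : ℂ) (v : Fin N → ℂ), v ≠ 0 →
        (M.map Complex.ofReal).mulVec v = lam • v → 0 ≤ lam.re) ∧
    (∀ x : Fin N → ℝ, M.mulVec x = 0 ↔ ∃ c : ℝ, x = fun _ => c) :=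
  stmt_7_general N δ B G Gr hconn w hw hedge hwpos M hM
end

section
/- If for all nodes j one has (X_j − X'_j)^{-1} > ∑_{ℓ=1}^N B_{j,ℓ}, then the matrix H − X^{-1} is negative definite, where H_{j,ℓ} = B_{j,ℓ} cos(δ_ℓ − δ_j) and X is the diagonal matrix with entries X_j − X'_j. -/
open Matrix

/-!
Bounding `cos` by `1` in absolute value, the quadratic form of `H` is dominated entrywise by that
of `B`, and `B_{jℓ} y_j y_ℓ ≤ B_{jℓ} (y_j² + y_ℓ²) / 2`; by the symmetry of `B` the right-hand side
sums to `∑_j (∑_ℓ B_{jℓ}) y_j²`, which the hypothesis makes strictly smaller than `yᵀ X⁻¹ y` for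
`y ≠ 0`. This is the quadratic-form version of Geršgorin's bound for the strictly diagonally
dominant matrix `X⁻¹ - H`.
-/

namespace Matrix

variable {ι : Type*} [Fintype ι]

theorem dotProduct_mulVec_eq_sum_sum (A : Matrix ι ι ℝ) (y : ι → ℝ) :
    y ⬝ᵥ A *ᵥ y = ∑ j, ∑ ℓ, A j ℓ * (y j * y ℓ) := by
  simp only [dotProduct, mulVec, Finset.mul_sum]
  exact Finset.sum_congr rfl fun j _ => Finset.sum_congr rfl fun ℓ _ => by ring

theorem dotProduct_diagonal_mulVec [DecidableEq ι] (d y : ι → ℝ) :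
    y ⬝ᵥ diagonal d *ᵥ y = ∑ j, d j * y j ^ 2 := by
  simp only [dotProduct, mulVec_diagonal]
  exact Finset.sum_congr rfl fun j _ => by ring

theorem sum_sum_mul_add_sq_div_two_of_transpose_eq {B : Matrix ι ι ℝ} (hB : Bᵀ = B)
    (y : ι → ℝ) :
    ∑ j, ∑ ℓ, B j ℓ * ((y j ^ 2 + y ℓ ^ 2) / 2) = ∑ j, (∑ ℓ, B j ℓ) * y j ^ 2 := by
  have hswap : ∑ j, ∑ ℓ, B j ℓ * y ℓ ^ 2 = ∑ j, ∑ ℓ, B j ℓ * y j ^ 2 := by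
    rw [Finset.sum_comm]
    exact Finset.sum_congr rfl fun j _ => Finset.sum_congr rfl fun ℓ _ => by
      rw [← transpose_apply B ℓ j, hB]
  calc ∑ j, ∑ ℓ, B j ℓ * ((y j ^ 2 + y ℓ ^ 2) / 2)
      = (∑ j, ∑ ℓ, B j ℓ * y j ^ 2 + ∑ j, ∑ ℓ, B j ℓ * y ℓ ^ 2) / 2 := by
        simp only [mul_add, add_div, mul_div_assoc', Finset.sum_add_distrib, Finset.sum_div]
    _ = ∑ j, (∑ ℓ, B j ℓ) * y j ^ 2 := by
        rw [hswap, add_self_div_two]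
        simp only [Finset.sum_mul]

theorem dotProduct_mulVec_le_of_abs_le {A B : Matrix ι ι ℝ} (hAB : ∀ j ℓ, |A j ℓ| ≤ B j ℓ)
    (hB : Bᵀ = B) (y : ι → ℝ) :
    y ⬝ᵥ A *ᵥ y ≤ ∑ j, (∑ ℓ, B j ℓ) * y j ^ 2 := by
  rw [dotProduct_mulVec_eq_sum_sum, ← sum_sum_mul_add_sq_div_two_of_transpose_eq hB]
  refine Finset.sum_le_sum fun j _ => Finset.sum_le_sum fun ℓ _ => ?_
  have hamgm : |y j * y ℓ| ≤ (y j ^ 2 + y ℓ ^ 2) / 2 := by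
    rw [abs_mul, le_div_iff₀ two_pos]
    nlinarith [sq_nonneg (|y j| - |y ℓ|), sq_abs (y j), sq_abs (y ℓ)]
  calc A j ℓ * (y j * y ℓ) ≤ |A j ℓ| * |y j * y ℓ| := (le_abs_self _).trans (abs_mul _ _).le
    _ ≤ B j ℓ * ((y j ^ 2 + y ℓ ^ 2) / 2) :=
        mul_le_mul (hAB j ℓ) hamgm (abs_nonneg _) ((abs_nonneg _).trans (hAB j ℓ))

theorem sum_mul_sq_lt_sum_mul_sq {r d y : ι → ℝ} (hrd : ∀ j, r j < d j) (hy : y ≠ 0) :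
    ∑ j, r j * y j ^ 2 < ∑ j, d j * y j ^ 2 := by
  obtain ⟨k, hk⟩ := Function.ne_iff.mp hy
  refine Finset.sum_lt_sum (fun j _ => mul_le_mul_of_nonneg_right (hrd j).le (sq_nonneg _))
    ⟨k, Finset.mem_univ k, mul_lt_mul_of_pos_right (hrd k) (sq_pos_of_ne_zero hk)⟩

theorem dotProduct_sub_diagonal_mulVec_neg [DecidableEq ι] {A B : Matrix ι ι ℝ} {d : ι → ℝ}
    (hAB : ∀ j ℓ, |A j ℓ| ≤ B j ℓ) (hB : Bᵀ = B) (hd : ∀ j, ∑ ℓ, B j ℓ < d j) {y : ι → ℝ}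
    (hy : y ≠ 0) :
    y ⬝ᵥ (A - diagonal d) *ᵥ y < 0 := by
  rw [sub_mulVec, dotProduct_sub, sub_neg, dotProduct_diagonal_mulVec]
  exact (dotProduct_mulVec_le_of_abs_le hAB hB y).trans_lt (sum_mul_sq_lt_sum_mul_sq hd hy)

end Matrix

theorem stmt_8_general (N : ℕ) (B : Matrix (Fin N) (Fin N) ℝ) (hBsymm : Bᵀ = B)
    (hBnn : ∀ j ℓ, 0 ≤ B j ℓ) (δ X X' : Fin N → ℝ)
    (hcond : ∀ j, (∑ ℓ, B j ℓ) < (X j - X' j)⁻¹) :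
    ∀ y : Fin N → ℝ, y ≠ 0 →
      y ⬝ᵥ ((Matrix.of fun j ℓ => B j ℓ * Real.cos (δ ℓ - δ j)) -
        Matrix.diagonal fun j => (X j - X' j)⁻¹).mulVec y < 0 := by
  have hH : ∀ j ℓ, |B j ℓ * Real.cos (δ ℓ - δ j)| ≤ B j ℓ := fun j ℓ => by
    rw [abs_mul, abs_of_nonneg (hBnn j ℓ)]
    exact mul_le_of_le_one_right (hBnn j ℓ) (Real.abs_cos_le_one _)
  exact fun y hy => dotProduct_sub_diagonal_mulVec_neg hH hBsymm hcond hy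

/-- If `(X_j - X'_j)⁻¹ > ∑_ℓ B_{j,ℓ}` for all nodes `j`, then the matrix `H - X⁻¹`,
with `H_{j,ℓ} = B_{j,ℓ} cos(δ_ℓ - δ_j)` and `X = diag(X_j - X'_j)`, is negative definite. -/
theorem stmt_8 (N : ℕ) (B : Matrix (Fin N) (Fin N) ℝ) (hBsymm : Bᵀ = B)
    (hBnn : ∀ j ℓ, 0 ≤ B j ℓ) (δ X X' : Fin N → ℝ) (hX : ∀ j, X' j < X j)
    (hcond : ∀ j, (∑ ℓ, B j ℓ) < (X j - X' j)⁻¹) :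
    ∀ y : Fin N → ℝ, y ≠ 0 →
      y ⬝ᵥ ((Matrix.of fun j ℓ => B j ℓ * Real.cos (δ ℓ - δ j)) -
        Matrix.diagonal fun j => (X j - X' j)⁻¹).mulVec y < 0 :=
  stmt_8_general N B hBsymm hBnn δ X X' hcond
end

section
/- Let Ξ = [[−P, Rᵀ],[R, Q]] be a symmetric real block matrix, where P is symmetric positive semi-definite with kernel spanned by the all-ones vector 𝟏 when restricted appropriately, and let Ξ act on the subspace D = {(ξ,ε) : 𝟏ᵀξ = 0}. Then Ξ is negative definite on D if and only if (a) P is positive definite on {ξ : 𝟏ᵀξ = 0} and (b) Q + R P⁺ Rᵀ is negative definite, where P⁺ denotes the Moore–Penrose pseudoinverse. -/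
open Matrix

/-- Uniqueness of the Moore–Penrose pseudoinverse. -/
lemma mp_unique_aux {n : Type*} [Fintype n] [DecidableEq n] (M A B : Matrix n n ℝ)
    (hA1 : M * A * M = M) (hA2 : A * M * A = A) (hA3 : (M * A)ᵀ = M * A)
    (hB1 : M * B * M = M) (hB2 : B * M * B = B) (hB3 : (M * B)ᵀ = M * B)
    (hA4 : (A * M)ᵀ = A * M) (hB4 : (B * M)ᵀ = B * M) : A = B := by
  have h1 : A = A * M * B := by
    calc A = A * M * A := hA2.symm
    _ = A * (M * A) := by rw [mul_assoc]
    _ = A * (M * A)ᵀ := by rw [hA3]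
    _ = A * (Aᵀ * Mᵀ) := by rw [transpose_mul]
    _ = A * (Aᵀ * (M * B * M)ᵀ) := by rw [hB1]
    _ = A * (Aᵀ * (Mᵀ * (M * B)ᵀ)) := by rw [transpose_mul]
    _ = A * (Aᵀ * (Mᵀ * (M * B))) := by rw [hB3]
    _ = A * ((Aᵀ * Mᵀ) * (M * B)) := by rw [mul_assoc]
    _ = A * ((M * A)ᵀ * (M * B)) := by rw [transpose_mul]
    _ = A * ((M * A) * (M * B)) := by rw [hA3]
    _ = (A * M * A) * (M * B) := by noncomm_ring
    _ = A * (M * B) := by rw [hA2]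
    _ = A * M * B := by rw [mul_assoc]
  have h2 : B = A * M * B := by
    calc B = B * M * B := hB2.symm
    _ = (B * M)ᵀ * B := by rw [hB4]
    _ = Mᵀ * Bᵀ * B := by rw [transpose_mul]
    _ = (M * A * M)ᵀ * Bᵀ * B := by rw [hA1]
    _ = ((A * M)ᵀ * Mᵀ) * Bᵀ * B := by rw [mul_assoc M A M, transpose_mul]
    _ = ((A * M) * Mᵀ) * Bᵀ * B := by rw [hA4]
    _ = (A * M) * (Mᵀ * Bᵀ) * B := by noncomm_ring
    _ = (A * M) * (B * M)ᵀ * B := by rw [transpose_mul]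
    _ = (A * M) * (B * M) * B := by rw [hB4]
    _ = (A * M) * (B * M * B) := by noncomm_ring
    _ = A * M * B := by rw [hB2]
  rw [h1, ← h2]

/-- Schur-complement stability criterion I: the symmetric block matrix
`Ξ = [[-P, Rᵀ],[R, Q]]` (with `P` symmetric PSD whose kernel is spanned by the all-ones
vector, `Q` symmetric, `Pplus` the Moore–Penrose pseudoinverse of `P`) is negative
definite on `D = {(ξ,ε) : 𝟏ᵀξ = 0}` iff (a) `P` is positive definite on `{ξ : 𝟏ᵀξ = 0}`
and (b) `Q + R P⁺ Rᵀ` is negative definite. -/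
theorem stmt_10 (N : ℕ) (P Q R Pplus : Matrix (Fin N) (Fin N) ℝ)
    (hP : Pᵀ = P) (hQ : Qᵀ = Q)
    (hPSD : ∀ x : Fin N → ℝ, 0 ≤ x ⬝ᵥ P.mulVec x)
    (hker : ∀ x : Fin N → ℝ, P.mulVec x = 0 ↔ ∃ c : ℝ, x = fun _ => c)
    (hpen1 : P * Pplus * P = P) (hpen2 : Pplus * P * Pplus = Pplus)
    (hpen3 : (P * Pplus)ᵀ = P * Pplus) (hpen4 : (Pplus * P)ᵀ = Pplus * P) :
    (∀ z : Fin N ⊕ Fin N → ℝ, (∑ j, z (Sum.inl j)) = 0 → z ≠ 0 →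
        z ⬝ᵥ (Matrix.fromBlocks (-P) Rᵀ R Q).mulVec z < 0) ↔
    ((∀ ξ : Fin N → ℝ, (∑ j, ξ j) = 0 → ξ ≠ 0 → 0 < ξ ⬝ᵥ P.mulVec ξ) ∧
     (∀ ε : Fin N → ℝ, ε ≠ 0 → ε ⬝ᵥ (Q + R * Pplus * Rᵀ).mulVec ε < 0)) := by
  classical
  -- `Pplus` is symmetric (uniqueness of the Moore–Penrose inverse)
  have hB1 : P * Pplusᵀ * P = P := by
    have h := congrArg Matrix.transpose hpen1
    simp only [transpose_mul, hP] at h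
    rwa [← mul_assoc] at h
  have hB2 : Pplusᵀ * P * Pplusᵀ = Pplusᵀ := by
    have h := congrArg Matrix.transpose hpen2
    simp only [transpose_mul, hP] at h
    rwa [← mul_assoc] at h
  have e1 : P * Pplusᵀ = Pplus * P := by
    calc P * Pplusᵀ = Pᵀ * Pplusᵀ := by rw [hP]
    _ = (Pplus * P)ᵀ := (transpose_mul _ _).symm
    _ = Pplus * P := hpen4
  have e2 : Pplusᵀ * P = P * Pplus := by
    calc Pplusᵀ * P = Pplusᵀ * Pᵀ := by rw [hP]
    _ = (P * Pplus)ᵀ := (transpose_mul _ _).symm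
    _ = P * Pplus := hpen3
  have hB3 : (P * Pplusᵀ)ᵀ = P * Pplusᵀ := by
    calc (P * Pplusᵀ)ᵀ = Pplusᵀᵀ * Pᵀ := transpose_mul _ _
    _ = Pplus * P := by rw [transpose_transpose, hP]
    _ = P * Pplusᵀ := e1.symm
  have hB4 : (Pplusᵀ * P)ᵀ = Pplusᵀ * P := by
    calc (Pplusᵀ * P)ᵀ = Pᵀ * Pplusᵀᵀ := transpose_mul _ _
    _ = P * Pplus := by rw [transpose_transpose, hP]
    _ = Pplusᵀ * P := e2.symm
  have hPpT : Pplusᵀ = Pplus :=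
    (mp_unique_aux P Pplus Pplusᵀ hpen1 hpen2 hpen3 hB1 hB2 hB3 hpen4 hB4).symm
  have hcomm : P * Pplus = Pplus * P := by rw [hPpT] at e1; exact e1
  -- basic vector facts
  have hdt : ∀ (M : Matrix (Fin N) (Fin N) ℝ) (u v : Fin N → ℝ),
      u ⬝ᵥ M *ᵥ v = (Mᵀ *ᵥ u) ⬝ᵥ v := fun M u v => by
    rw [dotProduct_mulVec, mulVec_transpose]
  have hsymm : ∀ u v : Fin N → ℝ, u ⬝ᵥ P *ᵥ v = v ⬝ᵥ P *ᵥ u := fun u v => by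
    rw [hdt, hP, dotProduct_comm]
  have hone : P *ᵥ (fun _ => (1:ℝ)) = 0 := (hker _).mpr ⟨1, rfl⟩
  have hPplus1 : Pplus *ᵥ (fun _ => (1:ℝ)) = 0 := by
    have h0 : Pplus * (Pplus * P) = Pplus := by
      rw [← hcomm, ← mul_assoc, hpen2]
    calc Pplus *ᵥ (fun _ => (1:ℝ)) = (Pplus * (Pplus * P)) *ᵥ (fun _ => (1:ℝ)) := by rw [h0]
    _ = Pplus *ᵥ (Pplus *ᵥ (P *ᵥ (fun _ => (1:ℝ)))) := by
        rw [mulVec_mulVec, mulVec_mulVec, mul_assoc]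
    _ = 0 := by rw [hone]; simp
  have hsum_dot : ∀ v : Fin N → ℝ, (∑ j, v j) = (fun _ => (1:ℝ)) ⬝ᵥ v := by
    intro v; simp [dotProduct]
  -- the projection `P * Pplus` fixes mean-zero vectors
  have hproj : ∀ ξ : Fin N → ℝ, (∑ j, ξ j) = 0 → (P * Pplus) *ᵥ ξ = ξ := by
    intro ξ hs
    have hPP : P * (P * Pplus) = P := by rw [hcomm, ← mul_assoc, hpen1]
    have hPdiff : P *ᵥ (ξ - (P * Pplus) *ᵥ ξ) = 0 := by
      rw [mulVec_sub, mulVec_mulVec, hPP, sub_self]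
    obtain ⟨c, hc⟩ := (hker _).mp hPdiff
    have hsy : (∑ j, ((P * Pplus) *ᵥ ξ) j) = 0 := by
      rw [hsum_dot, hdt, hpen3, ← mulVec_mulVec, hPplus1, mulVec_zero, zero_dotProduct]
    have hcsum : (N : ℝ) * c = 0 := by
      have h := congrArg (fun v : Fin N → ℝ => ∑ j, v j) hc
      simp only [Pi.sub_apply, Finset.sum_sub_distrib, hs, hsy, sub_zero, zero_sub] at h
      simp only [Finset.sum_const, Finset.card_univ, Fintype.card_fin, nsmul_eq_mul] at h
      linarith [h]
    funext i
    have hNpos : 0 < N := i.pos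
    have hc0 : c = 0 := by
      have : (N : ℝ) ≠ 0 := Nat.cast_ne_zero.mpr hNpos.ne'
      exact (mul_eq_zero.mp hcsum).resolve_left this
    have := congrFun hc i
    simp only [Pi.sub_apply, hc0] at this
    linarith [this]
  -- key quadratic form identity
  have hkey : ∀ (ξ ε : Fin N → ℝ), (∑ j, ξ j) = 0 →
      (Sum.elim ξ ε) ⬝ᵥ (Matrix.fromBlocks (-P) Rᵀ R Q) *ᵥ (Sum.elim ξ ε)
        = -((ξ - (Pplus * Rᵀ) *ᵥ ε) ⬝ᵥ P *ᵥ (ξ - (Pplus * Rᵀ) *ᵥ ε))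
          + ε ⬝ᵥ (Q + R * Pplus * Rᵀ) *ᵥ ε := by
    intro ξ ε hs
    have f1 : ξ ⬝ᵥ Rᵀ *ᵥ ε = ε ⬝ᵥ R *ᵥ ξ := by
      rw [hdt, transpose_transpose, dotProduct_comm]
    have f2 : ξ ⬝ᵥ P *ᵥ ((Pplus * Rᵀ) *ᵥ ε) = ε ⬝ᵥ R *ᵥ ξ := by
      rw [mulVec_mulVec, ← mul_assoc, hdt]
      have ht : (P * Pplus * Rᵀ)ᵀ = R * (P * Pplus) := by
        rw [transpose_mul, transpose_transpose, hpen3]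
      rw [ht, ← mulVec_mulVec, hproj ξ hs, dotProduct_comm]
    have f3 : ((Pplus * Rᵀ) *ᵥ ε) ⬝ᵥ P *ᵥ ξ = ξ ⬝ᵥ P *ᵥ ((Pplus * Rᵀ) *ᵥ ε) :=
      hsymm _ _
    have f4 : ((Pplus * Rᵀ) *ᵥ ε) ⬝ᵥ P *ᵥ ((Pplus * Rᵀ) *ᵥ ε)
        = ε ⬝ᵥ (R * Pplus * Rᵀ) *ᵥ ε := by
      rw [mulVec_mulVec, ← mul_assoc, hdt, mulVec_mulVec]
      have hm : (P * Pplus * Rᵀ)ᵀ * (Pplus * Rᵀ) = R * Pplus * Rᵀ := by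
        rw [transpose_mul, transpose_transpose, hpen3, hcomm]
        calc R * (Pplus * P) * (Pplus * Rᵀ) = R * ((Pplus * P * Pplus) * Rᵀ) := by
              noncomm_ring
        _ = R * Pplus * Rᵀ := by rw [hpen2, mul_assoc]
      rw [hm, dotProduct_comm]
    rw [fromBlocks_mulVec]
    simp only [Sum.elim_comp_inl, Sum.elim_comp_inr]
    rw [sumElim_dotProduct_sumElim]
    rw [dotProduct_add, dotProduct_add, neg_mulVec, dotProduct_neg]
    rw [mulVec_sub, dotProduct_sub, sub_dotProduct, sub_dotProduct,
      add_mulVec, dotProduct_add]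
    rw [f1, f3, f2, f4]
    ring
  -- part (a) holds unconditionally
  have ha : ∀ ξ : Fin N → ℝ, (∑ j, ξ j) = 0 → ξ ≠ 0 → 0 < ξ ⬝ᵥ P.mulVec ξ := by
    intro ξ hs hne
    rcases (hPSD ξ).lt_or_eq with h | h
    · exact h
    · exfalso
      have hPsd : P.PosSemidef := by
        refine posSemidef_iff_dotProduct_mulVec.mpr ⟨?_, fun x => by simpa using hPSD x⟩
        show Pᴴ = P
        rw [conjTranspose_eq_transpose_of_trivial]; exact hP
      have hz : P *ᵥ ξ = 0 := by
        have := (hPsd.dotProduct_mulVec_zero_iff ξ).mp (by simpa using h.symm)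
        exact this
      obtain ⟨c, hc⟩ := (hker ξ).mp hz
      obtain ⟨i, hi⟩ := Function.ne_iff.mp hne
      have hNpos : 0 < N := i.pos
      have hcsum : (N : ℝ) * c = 0 := by
        rw [hc] at hs
        simpa [Finset.sum_const, Finset.card_univ, nsmul_eq_mul] using hs
      have hc0 : c = 0 :=
        (mul_eq_zero.mp hcsum).resolve_left (Nat.cast_ne_zero.mpr hNpos.ne')
      apply hi
      rw [hc, hc0]; rfl
  constructor
  · intro hL
    refine ⟨ha, ?_⟩
    intro ε hne
    set ξ := (Pplus * Rᵀ) *ᵥ ε with hξ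
    have hsξ : (∑ j, ξ j) = 0 := by
      rw [hsum_dot, hξ, hdt, transpose_mul, transpose_transpose, hPpT,
        ← mulVec_mulVec, hPplus1, mulVec_zero, zero_dotProduct]
    have hz : Sum.elim ξ ε ≠ 0 := by
      intro h
      apply hne
      funext i
      have := congrFun h (Sum.inr i)
      simpa using this
    have hL2 := hL (Sum.elim ξ ε) (by simpa using hsξ) hz
    rw [show (Matrix.fromBlocks (-P) Rᵀ R Q).mulVec (Sum.elim ξ ε)
        = (Matrix.fromBlocks (-P) Rᵀ R Q) *ᵥ (Sum.elim ξ ε) from rfl] at hL2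
    rw [hkey ξ ε hsξ] at hL2
    simpa [hξ] using hL2
  · rintro ⟨_, hb⟩ z hs hz
    have hzz : z = Sum.elim (z ∘ Sum.inl) (z ∘ Sum.inr) := by
      funext i; cases i <;> rfl
    set ξ := z ∘ Sum.inl with hξd
    set ε := z ∘ Sum.inr with hεd
    have hsξ : (∑ j, ξ j) = 0 := hs
    rw [hzz]
    show (Sum.elim ξ ε) ⬝ᵥ (Matrix.fromBlocks (-P) Rᵀ R Q) *ᵥ (Sum.elim ξ ε) < 0
    rw [hkey ξ ε hsξ]
    by_cases hε : ε = 0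
    · have hξne : ξ ≠ 0 := by
        intro h
        apply hz
        rw [hzz, h, hε]
        funext i; cases i <;> rfl
      have h1 : 0 < ξ ⬝ᵥ P *ᵥ ξ := ha ξ hsξ hξne
      rw [hε]
      simp only [mulVec_zero, sub_zero, zero_dotProduct]
      simpa using neg_neg_of_pos h1
    · have h1 : -((ξ - (Pplus * Rᵀ) *ᵥ ε) ⬝ᵥ P *ᵥ (ξ - (Pplus * Rᵀ) *ᵥ ε)) ≤ 0 :=
        neg_nonpos.mpr (hPSD _)
      have h2 := hb ε hε
      have h2' : ε ⬝ᵥ (Q + R * Pplus * Rᵀ) *ᵥ ε < 0 := h2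
      linarith
end

section
/- Let Ξ = [[−P, Rᵀ],[R, Q]] be a symmetric real block matrix with P𝟏 = 0. Then Ξ is negative definite on D = {(ξ,ε): 𝟏ᵀξ = 0} if and only if (a) Q is negative definite and (b) P + Rᵀ Q^{-1} R is positive definite on {ξ : 𝟏ᵀξ = 0}. -/
/-!
Completing the square in the second block: for invertible symmetric `Q` and
`w = y + Q⁻¹Rξ`, the form of `Ξ` at `(ξ, y)` is `wᵀQw - ξᵀ(P + RᵀQ⁻¹R)ξ`. The constraint
`𝟏ᵀξ = 0` leaves `y` free, so `ξ = 0` gives (a), which makes `Q` invertible, and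
`y = -Q⁻¹Rξ` gives (b). Conversely both terms are nonpositive and one of them is negative.
-/

open Matrix

namespace Matrix

variable {m n K : Type*} [Fintype m] [Fintype n] [DecidableEq n]

theorem isUnit_of_dotProduct_mulVec_neg [Field K] [Preorder K]
    {D : Matrix n n K} (hD : ∀ y ≠ 0, y ⬝ᵥ D *ᵥ y < 0) : IsUnit D := by
  refine (isUnit_iff_isUnit_det D).2 <| isUnit_iff_ne_zero.2 fun hdet => ?_
  obtain ⟨y, hy, hDy⟩ := exists_mulVec_eq_zero_iff.2 hdet
  simpa [hDy] using hD y hy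

theorem schur_complement_eq₂₂_of_trivialStar [CommRing K] [StarRing K] [TrivialStar K]
    (A : Matrix m m K) (B : Matrix m n K) {D : Matrix n n K} [Invertible D] (hD : Dᵀ = D)
    (x : m → K) (y : n → K) :
    Sum.elim x y ⬝ᵥ fromBlocks A B Bᵀ D *ᵥ Sum.elim x y
      = ((D⁻¹ * Bᵀ) *ᵥ x + y) ⬝ᵥ D *ᵥ ((D⁻¹ * Bᵀ) *ᵥ x + y)
        + x ⬝ᵥ (A - B * D⁻¹ * Bᵀ) *ᵥ x := by
  have hD' : D.IsHermitian := by rw [IsHermitian, conjTranspose_eq_transpose_of_trivial, hD]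
  simpa only [star_trivial, conjTranspose_eq_transpose_of_trivial, ← dotProduct_mulVec]
    using schur_complement_eq₂₂ A B x y hD'

variable [Field K] [LinearOrder K] [IsStrictOrderedRing K] [StarRing K] [TrivialStar K]

theorem fromBlocks₂₂_negDefOn_iff (p : (m → K) → Prop) (hp : p 0) (A : Matrix m m K)
    (B : Matrix m n K) {D : Matrix n n K} (hD : Dᵀ = D) :
    (∀ z : m ⊕ n → K, p (z ∘ Sum.inl) → z ≠ 0 → z ⬝ᵥ fromBlocks A B Bᵀ D *ᵥ z < 0) ↔
      (∀ y, y ≠ 0 → y ⬝ᵥ D *ᵥ y < 0) ∧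
        ∀ x, p x → x ≠ 0 → x ⬝ᵥ (A - B * D⁻¹ * Bᵀ) *ᵥ x < 0 := by
  constructor
  · intro h
    have hDneg : ∀ y, y ≠ 0 → y ⬝ᵥ D *ᵥ y < 0 := fun y hy => by
      simpa [fromBlocks_mulVec] using
        h (Sum.elim 0 y) hp fun h0 => hy (congrArg (· ∘ Sum.inr) h0)
    have := (isUnit_of_dotProduct_mulVec_neg hDneg).invertible
    refine ⟨hDneg, fun x hx hx0 => ?_⟩
    -- `y = -D⁻¹Bᵀx` kills the `D`-part of the Schur decomposition
    simpa [schur_complement_eq₂₂_of_trivialStar A B hD] using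
      h (Sum.elim x (-((D⁻¹ * Bᵀ) *ᵥ x))) hx fun h0 => hx0 (congrArg (· ∘ Sum.inl) h0)
  · rintro ⟨hDneg, hS⟩ z hz hz0
    have := (isUnit_of_dotProduct_mulVec_neg hDneg).invertible
    rw [← Sum.elim_comp_inl_inr z] at hz0 ⊢
    rw [schur_complement_eq₂₂_of_trivialStar A B hD]
    by_cases hx : z ∘ Sum.inl = 0
    · have hy : z ∘ Sum.inr ≠ 0 := fun hy => hz0 (by rw [hx, hy, Sum.elim_zero_zero])
      simpa [hx] using hDneg _ hy
    · have hw : ∀ w, w ⬝ᵥ D *ᵥ w ≤ 0 := fun w => by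
        rcases eq_or_ne w 0 with rfl | hw0
        · simp
        · exact (hDneg w hw0).le
      exact add_neg_of_nonpos_of_neg (hw _) (hS _ hz hx)

end Matrix

theorem stmt_11_general (N : ℕ) (P Q R : Matrix (Fin N) (Fin N) ℝ)
    (hQ : Qᵀ = Q) :
    (∀ z : Fin N ⊕ Fin N → ℝ, (∑ j, z (Sum.inl j)) = 0 → z ≠ 0 →
        z ⬝ᵥ (Matrix.fromBlocks (-P) Rᵀ R Q).mulVec z < 0) ↔
    ((∀ ε : Fin N → ℝ, ε ≠ 0 → ε ⬝ᵥ Q.mulVec ε < 0) ∧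
     (∀ ξ : Fin N → ℝ, (∑ j, ξ j) = 0 → ξ ≠ 0 →
        0 < ξ ⬝ᵥ (P + Rᵀ * Q⁻¹ * R).mulVec ξ)) := by
  have h := fromBlocks₂₂_negDefOn_iff (fun ξ : Fin N → ℝ => ∑ j, ξ j = 0) (by simp) (-P) Rᵀ hQ
  simpa only [Function.comp_apply, transpose_transpose, ← neg_add', neg_mulVec, dotProduct_neg,
    neg_lt_zero] using h

/-- Schur-complement stability criterion II: the symmetric block matrix
`Ξ = [[-P, Rᵀ],[R, Q]]` (with `P`, `Q` symmetric, `P𝟏 = 0`, `R𝟏 = 0`) is negative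
definite on `D = {(ξ,ε) : 𝟏ᵀξ = 0}` iff (a) `Q` is negative definite and
(b) `P + Rᵀ Q⁻¹ R` is positive definite on `{ξ : 𝟏ᵀξ = 0}`. -/
theorem stmt_11 (N : ℕ) (P Q R : Matrix (Fin N) (Fin N) ℝ)
    (hP : Pᵀ = P) (hQ : Qᵀ = Q)
    (hP1 : P.mulVec (fun _ => 1) = 0) (hR1 : R.mulVec (fun _ => 1) = 0) :
    (∀ z : Fin N ⊕ Fin N → ℝ, (∑ j, z (Sum.inl j)) = 0 → z ≠ 0 →
        z ⬝ᵥ (Matrix.fromBlocks (-P) Rᵀ R Q).mulVec z < 0) ↔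
    ((∀ ε : Fin N → ℝ, ε ≠ 0 → ε ⬝ᵥ Q.mulVec ε < 0) ∧
     (∀ ξ : Fin N → ℝ, (∑ j, ξ j) = 0 → ξ ≠ 0 →
        0 < ξ ⬝ᵥ (P + Rᵀ * Q⁻¹ * R).mulVec ξ)) :=
  stmt_11_general N P Q R hQ
end

section
/- If the matrix Ξ̂ = [[−P, Rᵀ],[R, Q]] (P, Q symmetric, P𝟏 = 0) is positive semidefinite in a direction (ξ, ε) with Ξ := [[−P, Rᵀ],[R, Q]] admitting an eigenvector (ξ, ε) ∈ D = {(ξ,ε): 𝟏ᵀξ = 0} with eigenvalue β ≥ 0 and ε ≠ 0, then for any positive definite diagonal matrix T⁻¹X one has (ξ, 0, ε)ᵀ J (ξ, 0, ε) = β εᵀ T⁻¹ X ε ≥ 0, where J is the full 3N×3N block Jacobian of the third-order model; hence J is not negative definite on the corresponding subspace. -/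
/-!
Since the velocity component of `(ξ, 0, ε)` vanishes and the first block row of `J` only sees
velocities, the quadratic form reduces to `εᵀ T⁻¹X (second block row of Ξ)(ξ, ε)`. By the
eigenvector equation that row equals `β ε`, so the form is `β εᵀ T⁻¹X ε`, which is nonnegative
because `T⁻¹X` is a nonnegative diagonal matrix.
-/

open Matrix

namespace Matrix

variable {l n o R : Type*} [Fintype l] [Fintype n] [Fintype o]

theorem sumElim_dotProduct_fromBlocks_mulVec_sumElim_zero [Semiring R]
    (J₁₁ : Matrix l l R) (J₁₂ : Matrix l n R) (J₁₃ : Matrix l o R)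
    (J₂₁ : Matrix n l R) (J₃₁ : Matrix o l R) (J₂₂ : Matrix n n R) (J₂₃ : Matrix n o R)
    (J₃₂ : Matrix o n R) (J₃₃ : Matrix o o R) (u : l → R) (w : o → R) :
    Sum.elim u (Sum.elim 0 w) ⬝ᵥ
        (fromBlocks J₁₁ (fromCols J₁₂ J₁₃) (fromRows J₂₁ J₃₁)
          (fromBlocks J₂₂ J₂₃ J₃₂ J₃₃)) *ᵥ Sum.elim u (Sum.elim 0 w)
      = u ⬝ᵥ (J₁₁ *ᵥ u + J₁₃ *ᵥ w) + w ⬝ᵥ (J₃₁ *ᵥ u + J₃₃ *ᵥ w) := by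
  simp only [fromBlocks_mulVec, Sum.elim_comp_inl, Sum.elim_comp_inr, fromCols_mulVec_sumElim,
    fromRows_mulVec, ← Sum.elim_add_add, sumElim_dotProduct_sumElim, mulVec_zero, zero_add,
    zero_dotProduct]

theorem fromBlocks_mulVec_sumElim_eq_smul_inr [NonUnitalNonAssocSemiring R]
    {A : Matrix l l R} {B : Matrix l o R} {C : Matrix o l R} {D : Matrix o o R}
    {u : l → R} {w : o → R} {β : R}
    (h : fromBlocks A B C D *ᵥ Sum.elim u w = β • Sum.elim u w) :
    C *ᵥ u + D *ᵥ w = β • w := by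
  funext j
  simpa [fromBlocks_mulVec] using congrFun h (Sum.inr j)

theorem dotProduct_diagonal_mulVec_self_nonneg [DecidableEq o] {d w : o → ℝ} (hd : 0 ≤ d) :
    0 ≤ w ⬝ᵥ diagonal d *ᵥ w :=
  (PosSemidef.diagonal hd).dotProduct_mulVec_nonneg w

end Matrix

theorem stmt_18_general (N : ℕ) (Λ Γ A C F H K : Matrix (Fin N) (Fin N) ℝ)
    (m d t x : Fin N → ℝ)
    (ht : ∀ j, 0 < t j) (hx : ∀ j, 0 < x j)
    (β : ℝ) (hβ : 0 ≤ β)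
    (ξ ε : Fin N → ℝ)
    (heig : (Matrix.fromBlocks (-(Λ + Γ)) (Aᵀ + C) (A + F)
        (H + K - Matrix.diagonal fun j => (x j)⁻¹)).mulVec (Sum.elim ξ ε)
      = β • Sum.elim ξ ε) :
    (Sum.elim ξ (Sum.elim 0 ε)) ⬝ᵥ
        (Matrix.fromBlocks 0 (Matrix.fromCols 1 0)
          (Matrix.fromRows
            ((Matrix.diagonal fun j => (m j)⁻¹) * (-(Λ + Γ)))
            ((Matrix.diagonal fun j => x j / t j) * (A + F)))
          (Matrix.fromBlocks
            (-((Matrix.diagonal fun j => (m j)⁻¹) * Matrix.diagonal d))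
            ((Matrix.diagonal fun j => (m j)⁻¹) * (Aᵀ + C))
            0
            ((Matrix.diagonal fun j => x j / t j) *
              (H + K - Matrix.diagonal fun j => (x j)⁻¹)))).mulVec
        (Sum.elim ξ (Sum.elim 0 ε))
      = β * (ε ⬝ᵥ (Matrix.diagonal fun j => x j / t j).mulVec ε) ∧
    0 ≤ (Sum.elim ξ (Sum.elim 0 ε)) ⬝ᵥ
        (Matrix.fromBlocks 0 (Matrix.fromCols 1 0)
          (Matrix.fromRows
            ((Matrix.diagonal fun j => (m j)⁻¹) * (-(Λ + Γ)))
            ((Matrix.diagonal fun j => x j / t j) * (A + F)))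
          (Matrix.fromBlocks
            (-((Matrix.diagonal fun j => (m j)⁻¹) * Matrix.diagonal d))
            ((Matrix.diagonal fun j => (m j)⁻¹) * (Aᵀ + C))
            0
            ((Matrix.diagonal fun j => x j / t j) *
              (H + K - Matrix.diagonal fun j => (x j)⁻¹)))).mulVec
        (Sum.elim ξ (Sum.elim 0 ε)) := by
  have hrow := fromBlocks_mulVec_sumElim_eq_smul_inr heig
  have hTX : 0 ≤ fun j => x j / t j := fun j => (div_pos (hx j) (ht j)).le
  rw [sumElim_dotProduct_fromBlocks_mulVec_sumElim_zero, zero_mulVec, zero_mulVec, zero_add,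
    dotProduct_zero, zero_add, ← mulVec_mulVec, ← mulVec_mulVec, ← mulVec_add, hrow, mulVec_smul,
    dotProduct_smul, smul_eq_mul]
  exact ⟨rfl, mul_nonneg hβ (dotProduct_diagonal_mulVec_self_nonneg hTX)⟩

/-- If `(ξ, ε)` (with `𝟏ᵀξ = 0`, `ε ≠ 0`) is an eigenvector of the reduced Jacobian
`Ξ = [[-Λ-Γ, Aᵀ+C],[A+F, H+K-X⁻¹]]` with eigenvalue `β ≥ 0`, then for the full
`3N×3N` Jacobian `J` of the third-order model one has
`(ξ,0,ε)ᵀ J (ξ,0,ε) = β εᵀ T⁻¹ X ε ≥ 0`; hence `J` is not negative definite. -/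
theorem stmt_18 (N : ℕ) (Λ Γ A C F H K : Matrix (Fin N) (Fin N) ℝ)
    (m d t x : Fin N → ℝ)
    (hm : ∀ j, 0 < m j) (hd : ∀ j, 0 < d j) (ht : ∀ j, 0 < t j) (hx : ∀ j, 0 < x j)
    (β : ℝ) (hβ : 0 ≤ β)
    (ξ ε : Fin N → ℝ) (hξ : (∑ j, ξ j) = 0) (hε : ε ≠ 0)
    (heig : (Matrix.fromBlocks (-(Λ + Γ)) (Aᵀ + C) (A + F)
        (H + K - Matrix.diagonal fun j => (x j)⁻¹)).mulVec (Sum.elim ξ ε)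
      = β • Sum.elim ξ ε) :
    (Sum.elim ξ (Sum.elim 0 ε)) ⬝ᵥ
        (Matrix.fromBlocks 0 (Matrix.fromCols 1 0)
          (Matrix.fromRows
            ((Matrix.diagonal fun j => (m j)⁻¹) * (-(Λ + Γ)))
            ((Matrix.diagonal fun j => x j / t j) * (A + F)))
          (Matrix.fromBlocks
            (-((Matrix.diagonal fun j => (m j)⁻¹) * Matrix.diagonal d))
            ((Matrix.diagonal fun j => (m j)⁻¹) * (Aᵀ + C))
            0
            ((Matrix.diagonal fun j => x j / t j) *
              (H + K - Matrix.diagonal fun j => (x j)⁻¹)))).mulVec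
        (Sum.elim ξ (Sum.elim 0 ε))
      = β * (ε ⬝ᵥ (Matrix.diagonal fun j => x j / t j).mulVec ε) ∧
    0 ≤ (Sum.elim ξ (Sum.elim 0 ε)) ⬝ᵥ
        (Matrix.fromBlocks 0 (Matrix.fromCols 1 0)
          (Matrix.fromRows
            ((Matrix.diagonal fun j => (m j)⁻¹) * (-(Λ + Γ)))
            ((Matrix.diagonal fun j => x j / t j) * (A + F)))
          (Matrix.fromBlocks
            (-((Matrix.diagonal fun j => (m j)⁻¹) * Matrix.diagonal d))
            ((Matrix.diagonal fun j => (m j)⁻¹) * (Aᵀ + C))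
            0
            ((Matrix.diagonal fun j => x j / t j) *
              (H + K - Matrix.diagonal fun j => (x j)⁻¹)))).mulVec
        (Sum.elim ξ (Sum.elim 0 ε)) :=
  stmt_18_general N Λ Γ A C F H K m d t x ht hx β hβ ξ ε heig
end
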